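/- arXiv:2312.11830 — 2 statements merged into one kernel-verified Lean document; each statement's English description precedes it below -/
import Mathlib

section
/- Let a, b > 0 and let z : ℝ → ℂ² be a differentiable curve satisfying z'(t) = R_{a,b}(z(t)) = (2πi·z₁(t)/a, 2πi·z₂(t)/b) for all t. Suppose z is not constant and z(T) = z(0) for some T > 0. Then T is a positive integer multiple of a or a positive integer multiple of b; in particular T ≥ min(a, b). (Hence the minimal action of Reeb orbits on ∂E(a,b) is at least min(a,b).) -/
/-!
Along a solution of `z' = R_{a,b}(z)` the two coordinates obey the decoupled linear equations
`zⱼ' = (2πi/aⱼ) zⱼ`, so `z(t) = (e^{2πit/a} z₁(0), e^{2πit/b} z₂(0))`. A nonconstant solution has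
`z(0) ≠ 0`, and a nonzero coordinate returns to its initial value at time `T` only if
`e^{2πiT/aⱼ} = 1`, i.e. `T ∈ aⱼℤ`; as `T > 0` the multiple is positive.
-/

noncomputable section

open Complex

/-- The Reeb vector field of the standard Liouville form on the boundary of the
ellipsoid `E(a,b)`: `R_{a,b}(z) = (2πi·z₁/a, 2πi·z₂/b)`. -/
def reebEllipsoid (a b : ℝ) (z : ℂ × ℂ) : ℂ × ℂ :=
  (2 * (Real.pi : ℂ) * Complex.I * z.1 / (a : ℂ),
   2 * (Real.pi : ℂ) * Complex.I * z.2 / (b : ℂ))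

open Real

theorem eq_cexp_mul_smul_of_hasDerivAt {E : Type*} [NormedAddCommGroup E] [NormedSpace ℂ E]
    {c : ℂ} {w : ℝ → E} (hw : ∀ t, HasDerivAt w (c • w t) t) (t : ℝ) :
    w t = cexp (c * t) • w 0 := by
  have hconst : ∀ s : ℝ, HasDerivAt (fun s : ℝ => cexp (-(c * s)) • w s) 0 s := by
    intro s
    have he : HasDerivAt (fun s : ℝ => cexp (-(c * s))) (cexp (-(c * s)) * -c) s := by
      simpa using (((hasDerivAt_id s).ofReal_comp.const_mul c).neg).cexp
    have hcancel : cexp (-(c * s)) * c + cexp (-(c * s)) * -c = 0 := by ring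
    convert he.smul (hw s) using 1
    · rfl
    · rw [smul_smul, ← add_smul, hcancel, zero_smul]
  have h := is_const_of_deriv_eq_zero (fun s => (hconst s).differentiableAt)
    (fun s => (hconst s).deriv) t 0
  simp only [ofReal_zero, mul_zero, neg_zero, Complex.exp_zero, one_smul] at h
  rw [← h, smul_smul, ← Complex.exp_add, add_neg_cancel, Complex.exp_zero, one_smul]

theorem reebEllipsoid_solution_eq {a b : ℝ} {z : ℝ → ℂ × ℂ} (hdiff : Differentiable ℝ z)
    (hode : ∀ t, deriv z t = reebEllipsoid a b (z t)) (t : ℝ) :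
    z t = (cexp (2 * π * I / a * t) * (z 0).1, cexp (2 * π * I / b * t) * (z 0).2) := by
  have hz : ∀ s, HasDerivAt z (reebEllipsoid a b (z s)) s := fun s =>
    hode s ▸ (hdiff s).hasDerivAt
  have h₁ : ∀ s, HasDerivAt (fun s => (z s).1) ((2 * π * I / a) • (z s).1) s := fun s =>
    (hz s).hasFDerivAt.fst.hasDerivAt.congr_deriv (by
      simp only [reebEllipsoid, ContinuousLinearMap.comp_apply,
        ContinuousLinearMap.toSpanSingleton_apply, one_smul, ContinuousLinearMap.coe_fst',
        smul_eq_mul]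
      ring)
  have h₂ : ∀ s, HasDerivAt (fun s => (z s).2) ((2 * π * I / b) • (z s).2) s := fun s =>
    (hz s).hasFDerivAt.snd.hasDerivAt.congr_deriv (by
      simp only [reebEllipsoid, ContinuousLinearMap.comp_apply,
        ContinuousLinearMap.toSpanSingleton_apply, one_smul, ContinuousLinearMap.coe_snd',
        smul_eq_mul]
      ring)
  exact Prod.ext (eq_cexp_mul_smul_of_hasDerivAt h₁ t) (eq_cexp_mul_smul_of_hasDerivAt h₂ t)

theorem exists_nat_eq_mul_of_cexp_eq_one {r T : ℝ} (hr : 0 < r) (hT : 0 < T)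
    (h : cexp (2 * π * I / r * T) = 1) : ∃ k : ℕ, 1 ≤ k ∧ T = k * r := by
  obtain ⟨n, hn⟩ := exp_eq_one_iff.mp h
  have hTn : T = n * r := by
    field_simp at hn
    exact (div_eq_iff hr.ne').mp (mod_cast hn)
  have hn_pos : 0 < n := by
    have : (0 : ℝ) < n := pos_of_mul_pos_left (hTn ▸ hT) hr.le
    exact_mod_cast this
  lift n to ℕ using hn_pos.le
  exact ⟨n, by omega, by exact_mod_cast hTn⟩

/-- Any period of a nonconstant solution of the Reeb flow of the ellipsoid `E(a,b)` is a
positive integer multiple of `a` or of `b`; in particular the minimal action of Reeb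
orbits on `∂E(a,b)` is at least `min(a, b)`. -/
theorem ellipsoid_period_multiple (a b T : ℝ) (ha : 0 < a) (hb : 0 < b)
    (z : ℝ → ℂ × ℂ) (hdiff : Differentiable ℝ z)
    (hode : ∀ t, deriv z t = reebEllipsoid a b (z t))
    (hnonconst : ∃ t s : ℝ, z t ≠ z s)
    (hT : 0 < T) (hper : z T = z 0) :
    ((∃ k : ℕ, 1 ≤ k ∧ T = (k : ℝ) * a) ∨ (∃ k : ℕ, 1 ≤ k ∧ T = (k : ℝ) * b)) ∧
      min a b ≤ T := by
  have hsol := reebEllipsoid_solution_eq hdiff hode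
  have hz₀ : (z 0).1 ≠ 0 ∨ (z 0).2 ≠ 0 := by
    obtain ⟨t, s, hts⟩ := hnonconst
    contrapose! hts
    simp [hsol t, hsol s, hts.1, hts.2]
  obtain ⟨hper₁, hper₂⟩ := Prod.ext_iff.mp ((hsol T).symm.trans hper)
  have hmult : (∃ k : ℕ, 1 ≤ k ∧ T = (k : ℝ) * a) ∨ (∃ k : ℕ, 1 ≤ k ∧ T = (k : ℝ) * b) := by
    rcases hz₀ with h₁ | h₂
    · exact .inl <| exists_nat_eq_mul_of_cexp_eq_one ha hT
        ((mul_left_eq_self₀.mp hper₁).resolve_right h₁)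
    · exact .inr <| exists_nat_eq_mul_of_cexp_eq_one hb hT
        ((mul_left_eq_self₀.mp hper₂).resolve_right h₂)
  refine ⟨hmult, ?_⟩
  rcases hmult with ⟨k, hk, rfl⟩ | ⟨k, hk, rfl⟩
  · exact (min_le_left a b).trans (le_mul_of_one_le_left ha.le (mod_cast hk))
  · exact (min_le_right a b).trans (le_mul_of_one_le_left hb.le (mod_cast hk))
end
end

section
/- Let a, b > 0. The set of real numbers T > 0 for which there exists a nonconstant differentiable curve z : ℝ → ℂ² with image contained in ∂E(a,b), satisfying z'(t) = R_{a,b}(z(t)) for all t and z(T) = z(0), is exactly {k·a : k ∈ ℤ, k ≥ 1} ∪ {k·b : k ∈ ℤ, k ≥ 1}. (This computes the action spectrum of the ellipsoid E(a,b); in particular the minimum action of a Reeb orbit on ∂E(a,b) is min(a,b).) -/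
/-!
The Reeb flow of `∂E(a,b)` rotates the two coordinates independently, with periods `a` and `b`:
`φₜ(w) = (e^{2πit/a} w₁, e^{2πit/b} w₂)`, and by uniqueness for the linear equations
`zⱼ' = (2πi/cⱼ) zⱼ` every Reeb trajectory is of this form. A point of `∂E(a,b)` has a nonzero
coordinate, so a period of the trajectory through it is a multiple of `a` or of `b`. Conversely,
the circles `∂E(a,b) ∩ (ℂ × 0)` and `∂E(a,b) ∩ (0 × ℂ)` are closed orbits with every such period.
-/

noncomputable section

open Complex

open scoped Real

lemma hasDerivAt_cexp_mul_ofReal (c : ℂ) (t : ℝ) :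
    HasDerivAt (fun s : ℝ => cexp (c * s)) (c * cexp (c * t)) t := by
  simpa [mul_comm] using ((hasDerivAt_id (t : ℂ)).const_mul c).cexp.comp_ofReal

lemma eq_cexp_mul_of_deriv_eq_mul {c : ℂ} {f : ℝ → ℂ} (hf : Differentiable ℝ f)
    (hf' : ∀ t, deriv f t = c * f t) (t : ℝ) : f t = cexp (c * t) * f 0 := by
  have hconst : ∀ s : ℝ, HasDerivAt (fun s : ℝ => cexp (-c * s) * f s) 0 s := fun s => by
    have := (hasDerivAt_cexp_mul_ofReal (-c) s).mul (hf s).hasDerivAt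
    rwa [hf' s, show -c * cexp (-c * s) * f s + cexp (-c * s) * (c * f s) = 0 by ring] at this
  have h := is_const_of_deriv_eq_zero (fun s => (hconst s).differentiableAt)
    (fun s => (hconst s).deriv) t 0
  rw [ofReal_zero, mul_zero, Complex.exp_zero, one_mul] at h
  rw [← h, ← mul_assoc, ← Complex.exp_add]
  simp

lemma norm_cexp_two_pi_I_mul_div (a t : ℝ) : ‖cexp (2 * π * I * t / a)‖ = 1 := by
  simp [norm_exp]

lemma cexp_two_pi_I_mul_div_eq_one_iff {a T : ℝ} (ha : a ≠ 0) :
    cexp (2 * π * I * T / a) = 1 ↔ ∃ n : ℤ, T = n * a := by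
  rw [Complex.exp_eq_one_iff]
  have : (2 * π * I : ℂ) ≠ 0 := by simp [Real.pi_ne_zero]
  refine exists_congr fun n => ?_
  rw [div_eq_iff (ofReal_ne_zero.mpr ha),
    show (n : ℂ) * (2 * π * I) * a = 2 * π * I * (n * a) by ring, mul_right_inj' this]
  exact_mod_cast Iff.rfl

def reebFlow (a b t : ℝ) (w : ℂ × ℂ) : ℂ × ℂ :=
  (cexp (2 * π * I * t / a) * w.1, cexp (2 * π * I * t / b) * w.2)

section ReebFlow

variable {a b : ℝ}

@[simp]
lemma norm_reebFlow_fst (a b t : ℝ) (w : ℂ × ℂ) : ‖(reebFlow a b t w).1‖ = ‖w.1‖ := by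
  simp [reebFlow, norm_cexp_two_pi_I_mul_div]

@[simp]
lemma norm_reebFlow_snd (a b t : ℝ) (w : ℂ × ℂ) : ‖(reebFlow a b t w).2‖ = ‖w.2‖ := by
  simp [reebFlow, norm_cexp_two_pi_I_mul_div]

lemma hasDerivAt_reebFlow (a b : ℝ) (w : ℂ × ℂ) (t : ℝ) :
    HasDerivAt (fun s => reebFlow a b s w) (reebEllipsoid a b (reebFlow a b t w)) t := by
  have h₁ := (hasDerivAt_cexp_mul_ofReal (2 * π * I / a) t).mul_const w.1
  have h₂ := (hasDerivAt_cexp_mul_ofReal (2 * π * I / b) t).mul_const w.2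
  simp only [div_mul_eq_mul_div] at h₁ h₂
  refine (h₁.prodMk h₂).congr_deriv ?_
  simp only [reebEllipsoid, reebFlow, Prod.mk.injEq]
  constructor <;> ring

lemma eq_reebFlow_of_deriv_eq_reebEllipsoid {z : ℝ → ℂ × ℂ} (hz : Differentiable ℝ z)
    (hode : ∀ t, deriv z t = reebEllipsoid a b (z t)) (t : ℝ) : z t = reebFlow a b t (z 0) := by
  have hfst : ∀ s, deriv (fun s => (z s).1) s = 2 * π * I / a * (z s).1 := fun s => by
    refine (hasFDerivAt_fst.comp_hasDerivAt s (hz s).hasDerivAt).deriv.trans ?_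
    simp [hode s, reebEllipsoid, mul_div_right_comm]
  have hsnd : ∀ s, deriv (fun s => (z s).2) s = 2 * π * I / b * (z s).2 := fun s => by
    refine (hasFDerivAt_snd.comp_hasDerivAt s (hz s).hasDerivAt).deriv.trans ?_
    simp [hode s, reebEllipsoid, mul_div_right_comm]
  ext : 1
  · simpa [reebFlow, div_mul_eq_mul_div] using eq_cexp_mul_of_deriv_eq_mul hz.fst hfst t
  · simpa [reebFlow, div_mul_eq_mul_div] using eq_cexp_mul_of_deriv_eq_mul hz.snd hsnd t

@[simp]
lemma reebFlow_zero (a b : ℝ) (w : ℂ × ℂ) : reebFlow a b 0 w = w := by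
  simp [reebFlow]

lemma reebFlow_fst_eq_self_iff (ha : a ≠ 0) {T : ℝ} {w : ℂ × ℂ} :
    (reebFlow a b T w).1 = w.1 ↔ w.1 = 0 ∨ ∃ n : ℤ, T = n * a := by
  rw [reebFlow, mul_left_eq_self₀, cexp_two_pi_I_mul_div_eq_one_iff ha, or_comm]

lemma reebFlow_snd_eq_self_iff (hb : b ≠ 0) {T : ℝ} {w : ℂ × ℂ} :
    (reebFlow a b T w).2 = w.2 ↔ w.2 = 0 ∨ ∃ n : ℤ, T = n * b := by
  rw [reebFlow, mul_left_eq_self₀, cexp_two_pi_I_mul_div_eq_one_iff hb, or_comm]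

end ReebFlow

lemma exists_one_le_of_exists_eq_int_mul {a T : ℝ} (ha : 0 < a) (hT : 0 < T)
    (h : ∃ n : ℤ, T = n * a) : ∃ k : ℤ, 1 ≤ k ∧ T = k * a := by
  obtain ⟨n, rfl⟩ := h
  exact ⟨n, by exact_mod_cast (pos_of_mul_pos_left hT ha.le : (0 : ℝ) < n), rfl⟩

lemma div_two_ne_int_mul {a : ℝ} (ha : a ≠ 0) (n : ℤ) : a / 2 ≠ n * a := by
  intro h
  have : ((2 * n : ℤ) : ℝ) = 1 := by
    push_cast
    field_simp at h
    linarith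
  have : 2 * n = 1 := by exact_mod_cast this
  omega

lemma pi_mul_norm_sqrt_div_pi_sq_div {a : ℝ} (ha : 0 < a) :
    π * ‖((√(a / π) : ℝ) : ℂ)‖ ^ 2 / a = 1 := by
  rw [norm_real, Real.norm_of_nonneg (Real.sqrt_nonneg _), Real.sq_sqrt (by positivity)]
  field_simp

def IsClosedReebOrbit (a b T : ℝ) (z : ℝ → ℂ × ℂ) : Prop :=
  Differentiable ℝ z ∧ (∀ t, π * ‖(z t).1‖ ^ 2 / a + π * ‖(z t).2‖ ^ 2 / b = 1) ∧
    (∀ t, deriv z t = reebEllipsoid a b (z t)) ∧ (∃ t s : ℝ, z t ≠ z s) ∧ z T = z 0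

namespace IsClosedReebOrbit

variable {a b T : ℝ} {z : ℝ → ℂ × ℂ}

lemma reebFlow_period_eq (hz : IsClosedReebOrbit a b T z) : reebFlow a b T (z 0) = z 0 := by
  rw [← eq_reebFlow_of_deriv_eq_reebEllipsoid hz.1 hz.2.2.1, hz.2.2.2.2]

lemma period_mem (ha : 0 < a) (hb : 0 < b) (hT : 0 < T) (hz : IsClosedReebOrbit a b T z) :
    (∃ k : ℤ, 1 ≤ k ∧ T = k * a) ∨ (∃ k : ℤ, 1 ≤ k ∧ T = k * b) := by
  have hfix := hz.reebFlow_period_eq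
  have hne : (z 0).1 ≠ 0 ∨ (z 0).2 ≠ 0 := by
    by_contra! h
    simpa [h.1, h.2] using hz.2.1 0
  rcases hne with h | h
  · exact .inl <| exists_one_le_of_exists_eq_int_mul ha hT <|
      ((reebFlow_fst_eq_self_iff ha.ne').1 (congrArg Prod.fst hfix)).resolve_left h
  · exact .inr <| exists_one_le_of_exists_eq_int_mul hb hT <|
      ((reebFlow_snd_eq_self_iff hb.ne').1 (congrArg Prod.snd hfix)).resolve_left h

end IsClosedReebOrbit

lemma isClosedReebOrbit_reebFlow {a b T s : ℝ} {w : ℂ × ℂ}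
    (hw : π * ‖w.1‖ ^ 2 / a + π * ‖w.2‖ ^ 2 / b = 1) (hT : reebFlow a b T w = w)
    (hs : reebFlow a b s w ≠ w) : IsClosedReebOrbit a b T (fun t => reebFlow a b t w) :=
  ⟨fun t => (hasDerivAt_reebFlow a b w t).differentiableAt, by simpa using hw,
    fun t => (hasDerivAt_reebFlow a b w t).deriv, ⟨s, 0, by simpa using hs⟩, by simpa using hT⟩

lemma exists_isClosedReebOrbit_int_mul_fst {a : ℝ} (b : ℝ) (ha : 0 < a) (k : ℤ) :
    ∃ z, IsClosedReebOrbit a b (k * a) z := by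
  refine ⟨_, isClosedReebOrbit_reebFlow (w := ((√(a / π) : ℝ), 0)) (s := a / 2)
    (by simpa using pi_mul_norm_sqrt_div_pi_sq_div ha) ?_ fun h => ?_⟩
  · exact Prod.ext ((reebFlow_fst_eq_self_iff ha.ne').2 (.inr ⟨k, rfl⟩)) (by simp [reebFlow])
  · rcases (reebFlow_fst_eq_self_iff ha.ne').1 (congrArg Prod.fst h) with h0 | ⟨n, hn⟩
    · exact (Real.sqrt_pos.2 (by positivity)).ne' (ofReal_eq_zero.1 h0)
    · exact div_two_ne_int_mul ha.ne' n hn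

lemma exists_isClosedReebOrbit_int_mul_snd (a : ℝ) {b : ℝ} (hb : 0 < b) (k : ℤ) :
    ∃ z, IsClosedReebOrbit a b (k * b) z := by
  refine ⟨_, isClosedReebOrbit_reebFlow (w := (0, (√(b / π) : ℝ))) (s := b / 2)
    (by simpa using pi_mul_norm_sqrt_div_pi_sq_div hb) ?_ fun h => ?_⟩
  · exact Prod.ext (by simp [reebFlow]) ((reebFlow_snd_eq_self_iff hb.ne').2 (.inr ⟨k, rfl⟩))
  · rcases (reebFlow_snd_eq_self_iff hb.ne').1 (congrArg Prod.snd h) with h0 | ⟨n, hn⟩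
    · exact (Real.sqrt_pos.2 (by positivity)).ne' (ofReal_eq_zero.1 h0)
    · exact div_two_ne_int_mul hb.ne' n hn

/-- The action spectrum of the ellipsoid `E(a,b)`: the set of periods of nonconstant
periodic Reeb trajectories on `∂E(a,b)` is exactly
`{k·a : k ≥ 1} ∪ {k·b : k ≥ 1}`. -/
theorem ellipsoid_action_spectrum (a b : ℝ) (ha : 0 < a) (hb : 0 < b) :
    {T : ℝ | 0 < T ∧ ∃ z : ℝ → ℂ × ℂ, Differentiable ℝ z ∧
      (∀ t, Real.pi * ‖(z t).1‖ ^ 2 / a +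
        Real.pi * ‖(z t).2‖ ^ 2 / b = 1) ∧
      (∀ t, deriv z t = reebEllipsoid a b (z t)) ∧
      (∃ t s : ℝ, z t ≠ z s) ∧ z T = z 0} =
    {T : ℝ | ∃ k : ℤ, 1 ≤ k ∧ T = (k : ℝ) * a} ∪
      {T : ℝ | ∃ k : ℤ, 1 ≤ k ∧ T = (k : ℝ) * b} := by
  ext T
  change (0 < T ∧ ∃ z, IsClosedReebOrbit a b T z) ↔ _
  constructor
  · exact fun ⟨hT, _, hz⟩ => hz.period_mem ha hb hT
  · rintro (⟨k, hk, rfl⟩ | ⟨k, hk, rfl⟩)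
    · exact ⟨by positivity, exists_isClosedReebOrbit_int_mul_fst b ha k⟩
    · exact ⟨by positivity, exists_isClosedReebOrbit_int_mul_snd a hb k⟩
end
end
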